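/- arXiv:1403.6558 — 4 statements merged into one kernel-verified Lean document; each statement's English description precedes it below -/
import Mathlib

section
/- Fix an integer r ≥ 2. As ε → 0⁺, with λ = 1 + ε, the quantity ρ_{r,λ} defined by 1 - ρ_{r,λ} = (1 - ρ_λ)^{1/(r-1)} satisfies ρ_{r,λ} = (2/(r-1))ε - (2(r+2)/(3(r-1)²))ε² + O(ε³); in particular ρ_{r,λ} ~ 2ε/(r-1). -/
open Real Filter Asymptotics Topology

/-!
Put `λ = 1 + ε`. Since `λρ = -log (1 - ρ) = ρ + ρ²/2 + ρ³/3 + O(ρ⁴)`, we get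
`ε = ρ/2 + ρ²/3 + O(ρ³)`, so `ρ ≤ 2ε`, and inverting, `ρ = 2ε - 8ε²/3 + O(ε³)` and
`λρ = 2ε - 2ε²/3 + O(ε³)`. With `s = 1/(r-1)` we have `ρ_{r,λ} = 1 - exp (-sλρ)`, and the
second-order Taylor expansion of `exp` gives the claim.
-/

lemma sum_range_pow_div_le_neg_log_one_sub {x : ℝ} (hx0 : 0 ≤ x) (hx1 : x < 1) (n : ℕ) :
    ∑ i ∈ Finset.range n, x ^ (i + 1) / (i + 1) ≤ -log (1 - x) :=
  sum_le_hasSum _ (fun i _ => by positivity)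
    (hasSum_pow_div_log_of_abs_lt_one (by rwa [abs_of_nonneg hx0]))

lemma le_two_mul_of_one_sub_eq_exp {ε ρ : ℝ} (hρ0 : 0 < ρ) (hρ1 : ρ < 1)
    (h : 1 - ρ = exp (-((1 + ε) * ρ))) : ρ ≤ 2 * ε := by
  have hlog := sum_range_pow_div_le_neg_log_one_sub hρ0.le hρ1 2
  rw [h, log_exp, neg_neg] at hlog
  norm_num [Finset.sum_range_succ] at hlog
  nlinarith

lemma abs_sub_div_two_sub_sq_div_three_le {ε ρ : ℝ} (hρ0 : 0 < ρ) (hρ : ρ ≤ 1 / 2)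
    (h : 1 - ρ = exp (-((1 + ε) * ρ))) : |ε - (ρ / 2 + ρ ^ 2 / 3)| ≤ 2 * ρ ^ 3 := by
  have hlog := abs_log_sub_add_sum_range_le (x := ρ) (by rw [abs_of_pos hρ0]; linarith) 3
  rw [h, log_exp, abs_of_pos hρ0] at hlog
  norm_num [Finset.sum_range_succ] at hlog
  have hρ4 : ρ ^ 4 / (1 - ρ) ≤ 2 * ρ ^ 4 := by
    rw [div_le_iff₀ (by linarith)]; nlinarith [pow_pos hρ0 4]
  have key : ε - (ρ / 2 + ρ ^ 2 / 3) = -(ρ + ρ ^ 2 / 2 + ρ ^ 3 / 3 + -((1 + ε) * ρ)) / ρ := by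
    field_simp; ring
  rw [key, abs_div, abs_neg, abs_of_pos hρ0, div_le_iff₀ hρ0]
  nlinarith

/-- Pairs `(ε, ρ)` where `ρ ∈ (0, 1)` solves `1 - ρ = exp (-(1 + ε) ρ)`, as `ε → 0⁺`. -/
def rootFilter : Filter (ℝ × ℝ) :=
  comap Prod.fst (𝓝[>] 0) ⊓ 𝓟 {p | 0 < p.2 ∧ p.2 < 1 ∧ 1 - p.2 = exp (-((1 + p.1) * p.2))}

lemma eventually_rootFilter :
    ∀ᶠ p in rootFilter, 0 < p.1 ∧ 0 < p.2 ∧ p.2 < 1 ∧ 1 - p.2 = exp (-((1 + p.1) * p.2)) := by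
  rw [rootFilter, eventually_inf_principal]
  filter_upwards [tendsto_comap.eventually self_mem_nhdsWithin] with p h1 h2
  exact ⟨h1, h2⟩

lemma tendsto_fst_rootFilter : Tendsto Prod.fst rootFilter (𝓝 0) :=
  tendsto_nhdsWithin_iff.mp (tendsto_comap.mono_left inf_le_left) |>.1

lemma snd_isBigO_fst_rootFilter : Prod.snd =O[rootFilter] Prod.fst := by
  refine .of_bound 2 ?_
  filter_upwards [eventually_rootFilter] with p ⟨hε, hρ0, hρ1, h⟩
  rw [Real.norm_of_nonneg hρ0.le, Real.norm_of_nonneg hε.le]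
  exact le_two_mul_of_one_sub_eq_exp hρ0 hρ1 h

lemma tendsto_snd_rootFilter : Tendsto Prod.snd rootFilter (𝓝 0) :=
  snd_isBigO_fst_rootFilter.trans_tendsto tendsto_fst_rootFilter

lemma fst_pow_isBigO_rootFilter {m n : ℕ} (h : m ≤ n) :
    (fun p : ℝ × ℝ => p.1 ^ n) =O[rootFilter] fun p => p.1 ^ m := by
  rcases h.eq_or_lt with rfl | h
  · exact isBigO_refl _ _
  · exact (isLittleO_pow_pow h).isBigO.comp_tendsto tendsto_fst_rootFilter

lemma fst_expansion_rootFilter :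
    (fun p : ℝ × ℝ => p.1 - (p.2 / 2 + p.2 ^ 2 / 3)) =O[rootFilter] fun p => p.1 ^ 3 := by
  refine .trans ?_ (snd_isBigO_fst_rootFilter.pow 3)
  refine .of_bound 2 ?_
  filter_upwards [eventually_rootFilter,
    tendsto_snd_rootFilter.eventually (gt_mem_nhds (by norm_num : (0 : ℝ) < 1 / 2))]
    with p ⟨_, hρ0, _, h⟩ hρ
  rw [Real.norm_of_nonneg (by positivity : 0 ≤ p.2 ^ 3)]
  exact abs_sub_div_two_sub_sq_div_three_le hρ0 hρ.le h

lemma snd_sub_two_mul_fst_isBigO_rootFilter :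
    (fun p : ℝ × ℝ => p.2 - 2 * p.1) =O[rootFilter] fun p => p.1 ^ 2 := by
  have hQ := fst_expansion_rootFilter.trans (fst_pow_isBigO_rootFilter (by norm_num : 2 ≤ 3))
  have hρ2 := snd_isBigO_fst_rootFilter.pow 2
  exact ((hQ.const_mul_left (-2)).sub (hρ2.const_mul_left (2 / 3))).congr_left fun p => by ring

lemma snd_expansion_rootFilter :
    (fun p : ℝ × ℝ => p.2 - (2 * p.1 - 8 / 3 * p.1 ^ 2)) =O[rootFilter] fun p => p.1 ^ 3 := by
  have hsum : (fun p : ℝ × ℝ => p.2 + 2 * p.1) =O[rootFilter] Prod.fst :=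
    snd_isBigO_fst_rootFilter.add (isBigO_const_mul_self 2 _ _)
  have hprod : (fun p : ℝ × ℝ => (p.2 - 2 * p.1) * (p.2 + 2 * p.1)) =O[rootFilter]
      fun p => p.1 ^ 3 :=
    (snd_sub_two_mul_fst_isBigO_rootFilter.mul hsum).congr_right fun p => by ring
  exact ((fst_expansion_rootFilter.const_mul_left (-2)).sub
    (hprod.const_mul_left (2 / 3))).congr_left fun p => by ring

lemma one_add_fst_mul_snd_expansion_rootFilter :
    (fun p : ℝ × ℝ => (1 + p.1) * p.2 - (2 * p.1 - 2 / 3 * p.1 ^ 2)) =O[rootFilter]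
      fun p => p.1 ^ 3 := by
  have hprod : (fun p : ℝ × ℝ => p.1 * (p.2 - 2 * p.1)) =O[rootFilter] fun p => p.1 ^ 3 :=
    ((isBigO_refl _ _).mul snd_sub_two_mul_fst_isBigO_rootFilter).congr_right fun p => by ring
  exact (snd_expansion_rootFilter.add hprod).congr_left fun p => by ring

lemma one_add_fst_mul_snd_sub_isBigO_rootFilter :
    (fun p : ℝ × ℝ => (1 + p.1) * p.2 - 2 * p.1) =O[rootFilter] fun p => p.1 ^ 2 :=
  ((one_add_fst_mul_snd_expansion_rootFilter.trans (fst_pow_isBigO_rootFilter (by norm_num))).sub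
    (isBigO_const_mul_self (2 / 3) _ _)).congr_left fun p => by ring

lemma one_add_fst_mul_snd_isBigO_rootFilter :
    (fun p : ℝ × ℝ => (1 + p.1) * p.2) =O[rootFilter] Prod.fst := by
  have hsq : (fun p : ℝ × ℝ => p.1 ^ 2) =O[rootFilter] Prod.fst := by
    simpa using fst_pow_isBigO_rootFilter (by norm_num : 1 ≤ 2)
  exact ((one_add_fst_mul_snd_sub_isBigO_rootFilter.trans hsq).add
    (isBigO_const_mul_self 2 _ _)).congr_left fun p => by ring

lemma exp_sub_quadratic_isBigO : (fun y => exp y - (1 + y + y ^ 2 / 2)) =O[𝓝 0] (· ^ 3) :=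
  (exp_sub_sum_range_isBigO_pow 3).congr_left fun y => by
    simp [Finset.sum_range_succ]

lemma one_sub_rpow_expansion_rootFilter (s : ℝ) :
    (fun p : ℝ × ℝ => 1 - (1 - p.2) ^ s - (2 * s * p.1 - (2 / 3 * s + 2 * s ^ 2) * p.1 ^ 2))
      =O[rootFilter] fun p => p.1 ^ 3 := by
  set x : ℝ × ℝ → ℝ := fun p => -(s * ((1 + p.1) * p.2))
  have hx : x =O[rootFilter] Prod.fst :=
    (one_add_fst_mul_snd_isBigO_rootFilter.const_mul_left (-s)).congr_left fun p => by simp [x]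
  have hx_add : (fun p : ℝ × ℝ => x p + 2 * s * p.1) =O[rootFilter] fun p => p.1 ^ 2 :=
    (one_add_fst_mul_snd_sub_isBigO_rootFilter.const_mul_left (-s)).congr_left fun p => by
      simp only [x]; ring
  have hx_sub : (fun p : ℝ × ℝ => x p - 2 * s * p.1) =O[rootFilter] Prod.fst :=
    hx.sub (isBigO_const_mul_self (2 * s) _ _)
  have htaylor : (fun p => exp (x p) - (1 + x p + x p ^ 2 / 2)) =O[rootFilter]
      fun p => p.1 ^ 3 :=
    (exp_sub_quadratic_isBigO.comp_tendsto (hx.trans_tendsto tendsto_fst_rootFilter)).trans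
      (hx.pow 3)
  have hcubic : (fun p : ℝ × ℝ => x p + 2 * s * p.1 - 2 / 3 * s * p.1 ^ 2) =O[rootFilter]
      fun p => p.1 ^ 3 :=
    (one_add_fst_mul_snd_expansion_rootFilter.const_mul_left (-s)).congr_left fun p => by
      simp only [x]; ring
  have hprod : (fun p : ℝ × ℝ => (x p + 2 * s * p.1) * (x p - 2 * s * p.1)) =O[rootFilter]
      fun p => p.1 ^ 3 :=
    (hx_add.mul hx_sub).congr_right fun p => by ring
  refine ((htaylor.neg_left.sub hcubic).sub (hprod.const_mul_left (1 / 2))).congr' ?_ .rfl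
  filter_upwards [eventually_rootFilter] with p ⟨_, _, hρ1, h⟩
  have hlog : log (1 - p.2) * s = x p := by
    rw [h, log_exp]; simp only [x]; ring
  rw [rpow_def_of_pos (by linarith), hlog]
  ring

lemma exists_bound_of_isBigO_rootFilter {f : ℝ × ℝ → ℝ} {n : ℕ}
    (h : f =O[rootFilter] fun p => p.1 ^ n) :
    ∃ C ε₀ : ℝ, 0 < C ∧ 0 < ε₀ ∧ ∀ ε ρ : ℝ, 0 < ε → ε < ε₀ →
      0 < ρ → ρ < 1 → 1 - ρ = exp (-((1 + ε) * ρ)) → |f (ε, ρ)| ≤ C * ε ^ n := by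
  obtain ⟨c, hc⟩ := h.bound
  rw [rootFilter, eventually_inf_principal, eventually_comap] at hc
  obtain ⟨ε₀, hε₀, hsub⟩ := mem_nhdsGT_iff_exists_Ioo_subset.mp hc
  refine ⟨max c 1, ε₀, by positivity, hε₀, fun ε ρ hε hεε₀ hρ0 hρ1 heq => ?_⟩
  have hbound := hsub ⟨hε, hεε₀⟩ (ε, ρ) rfl ⟨hρ0, hρ1, heq⟩
  rw [Real.norm_eq_abs, Real.norm_of_nonneg (by positivity)] at hbound
  exact hbound.trans (by gcongr; exact le_max_left c 1)

theorem rho_r_expansion_general (r : ℕ) :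
    ∃ C ε₀ : ℝ, 0 < C ∧ 0 < ε₀ ∧
      ∀ ε ρ ρr : ℝ, 0 < ε → ε < ε₀ →
        0 < ρ → ρ < 1 → 1 - ρ = Real.exp (-((1 + ε) * ρ)) →
        1 - ρr = (1 - ρ) ^ ((1 : ℝ) / (r - 1)) →
        |ρr - (2 / (r - 1) * ε - 2 * (r + 2) / (3 * (r - 1) ^ 2) * ε ^ 2)| ≤ C * ε ^ 3 := by
  set s : ℝ := 1 / (r - 1) with hs
  have hc₁ : 2 / ((r : ℝ) - 1) = 2 * s := by ring
  have hc₂ : 2 * ((r : ℝ) + 2) / (3 * (r - 1) ^ 2) = 2 / 3 * s + 2 * s ^ 2 := by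
    rcases eq_or_ne ((r : ℝ) - 1) 0 with hr | hr
    · simp [s, hr] -- for `r = 1` both sides are `0` by division by zero
    · rw [hs]; field_simp; ring
  obtain ⟨C, ε₀, hC, hε₀, hbound⟩ :=
    exists_bound_of_isBigO_rootFilter (one_sub_rpow_expansion_rootFilter s)
  refine ⟨C, ε₀, hC, hε₀, fun ε ρ ρr hε hεε₀ hρ0 hρ1 heq hρr => ?_⟩
  rw [hc₁, hc₂, show ρr = 1 - (1 - ρ) ^ s by linarith]
  exact hbound ε ρ hε hεε₀ hρ0 hρ1 heq

/-- Fix an integer r ≥ 2. As ε → 0⁺, with λ = 1 + ε, the quantity ρ_{r,λ} defined by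
1 - ρ_{r,λ} = (1 - ρ_λ)^{1/(r-1)} satisfies
ρ_{r,λ} = (2/(r-1))ε - (2(r+2)/(3(r-1)²))ε² + O(ε³). -/
theorem rho_r_expansion (r : ℕ) (hr : 2 ≤ r) :
    ∃ C ε₀ : ℝ, 0 < C ∧ 0 < ε₀ ∧
      ∀ ε ρ ρr : ℝ, 0 < ε → ε < ε₀ →
        0 < ρ → ρ < 1 → 1 - ρ = Real.exp (-((1 + ε) * ρ)) →
        1 - ρr = (1 - ρ) ^ ((1 : ℝ) / (r - 1)) →
        |ρr - (2 / (r - 1) * ε - 2 * (r + 2) / (3 * (r - 1) ^ 2) * ε ^ 2)| ≤ C * ε ^ 3 :=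
  rho_r_expansion_general r
end

section
/- Fix an integer r ≥ 2. As ε → 0⁺, with λ = 1 + ε, the quantity ρ*_{r,λ} := (λ/r)(1 - (1 - ρ_{r,λ})^r) - ρ_{r,λ} satisfies ρ*_{r,λ} ~ (2/(3(r-1)²)) ε³. -/
lemma quad_le_exp_neg {x : ℝ} (hx0 : 0 ≤ x) (hx2 : x ≤ 2) :
    1 - x + x^2/4 ≤ Real.exp (-x) := by
  have h := Real.add_one_le_exp (-(x/2))
  have h2 : Real.exp (-(x/2)) * Real.exp (-(x/2)) = Real.exp (-x) := by
    rw [← Real.exp_add]; ring_nf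
  nlinarith [Real.exp_pos (-(x/2))]

lemma exp_cubic_bound {x : ℝ} (hx0 : 0 ≤ x) (hx1 : x ≤ 1) :
    |Real.exp (-x) - (1 - x + x^2/2 - x^3/6)| ≤ x^4/6 := by
  have h := Real.exp_bound (x := -x) (by rwa [abs_neg, abs_of_nonneg hx0]) (n := 4) (by norm_num)
  simp only [Finset.sum_range_succ, Finset.sum_range_zero] at h
  norm_num [Nat.factorial] at h
  rw [abs_of_nonneg hx0] at h
  have he : Real.exp (-x) - (1 - x + x^2/2 - x^3/6)
      = Real.exp (-x) - (1 + -x + x^2/2 + (-x)^3/6) := by ring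
  rw [he]
  calc |Real.exp (-x) - (1 + -x + x^2/2 + (-x)^3/6)|
      ≤ x^4 * (5/(24*4)) := by convert h using 2 <;> ring_nf
    _ ≤ x^4/6 := by nlinarith [pow_nonneg hx0 4]

set_option maxHeartbeats 1000000

/-- Fix an integer r ≥ 2. As ε → 0⁺, with λ = 1 + ε, the quantity
ρ*_{r,λ} = (λ/r)(1 - (1 - ρ_{r,λ})^r) - ρ_{r,λ} satisfies ρ*_{r,λ} ~ (2/(3(r-1)²))ε³. -/
theorem rho_star_asymp (r : ℕ) (hr : 2 ≤ r) :
    ∀ δ : ℝ, 0 < δ → ∃ ε₀ : ℝ, 0 < ε₀ ∧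
      ∀ ε ρ ρr : ℝ, 0 < ε → ε < ε₀ →
        0 < ρ → ρ < 1 → 1 - ρ = Real.exp (-((1 + ε) * ρ)) →
        1 - ρr = (1 - ρ) ^ ((1 : ℝ) / (r - 1)) →
        |((1 + ε) / r * (1 - (1 - ρr) ^ r) - ρr) - 2 / (3 * (r - 1) ^ 2) * ε ^ 3|
          ≤ δ * ε ^ 3 := by
  intro δ hδ
  refine ⟨min (1/100) (δ/400), lt_min (by norm_num) (by positivity), ?_⟩
  intro ε ρ ρr hε hεlt hρ0 hρ1 hρeq hρr
  have hε100 : ε < 1/100 := lt_of_lt_of_le hεlt (min_le_left _ _)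
  have hεδ : ε ≤ δ/400 := le_of_lt (lt_of_lt_of_le hεlt (min_le_right _ _))
  have hε2 : ε*ε ≤ (1/100)*ε := mul_le_mul_of_nonneg_right hε100.le hε.le
  have hε3 : ε*ε*ε ≤ (1/100)*ε*ε := mul_le_mul_of_nonneg_right hε2 hε.le
  have hε4p : (0:ℝ) ≤ ε^4 := by positivity
  have hx2 : (2:ℝ) ≤ (r:ℝ) := by exact_mod_cast hr
  obtain ⟨a, ha⟩ : ∃ x:ℝ, x = (r:ℝ) - 1 := ⟨_, rfl⟩
  rw [show (1:ℝ)/((r:ℝ)-1) = 1/a by rw [ha]] at hρr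
  have ha1 : (1:ℝ) ≤ a := by rw [ha]; linarith
  have ha0p : (0:ℝ) < a := by linarith
  have ha0 : a ≠ 0 := ne_of_gt ha0p
  have ha1p : (0:ℝ) < a + 1 := by linarith
  have hra : (r:ℝ) = a + 1 := by rw [ha]; ring
  -- crude bound ρ ≤ 4ε
  have hy2 : (1+ε)*ρ ≤ 2 := by
    have h := mul_le_mul_of_nonneg_left hρ1.le (by linarith : (0:ℝ) ≤ 1+ε)
    linarith only [h, hε100, hε]
  have hquad := quad_le_exp_neg (x := (1+ε)*ρ) (by positivity) hy2
  rw [← hρeq] at hquad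
  have hsq1 : ρ^2 ≤ ((1+ε)*ρ)^2 := by
    have := mul_nonneg (by positivity : (0:ℝ) ≤ 2*ε+ε^2) (sq_nonneg ρ)
    nlinarith [this]
  have hρ4 : ρ ≤ 4*ε := by nlinarith [hsq1, hquad, mul_pos hρ0 hρ0, hρ0]
  have hy1 : (1+ε)*ρ ≤ 1 := by
    have h := mul_le_mul (by linarith : (1+ε) ≤ 101/100) hρ4 hρ0.le (by norm_num)
    linarith only [h, hε100, hε]
  -- the error term e1 and the basic identity
  obtain ⟨e1, he1def⟩ : ∃ x:ℝ, x = (1 - ρ) - (1 - (1+ε)*ρ + ((1+ε)*ρ)^2/2 - ((1+ε)*ρ)^3/6) := ⟨_, rfl⟩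
  have he1 : |e1| ≤ ((1+ε)*ρ)^4/6 := by
    rw [he1def, hρeq]
    exact exp_cubic_bound (by positivity) hy1
  rw [abs_le] at he1
  have hkey : ε*ρ = ((1+ε)*ρ)^2/2 - ((1+ε)*ρ)^3/6 + e1 := by
    rw [he1def]; ring
  -- refined bounds on ρ
  have hcube125 : (1+ε)^3 ≤ 5/4 := by linarith only [hε2, hε3, hε100, hε]
  have hstep3 : (1+ε)^3*ρ ≤ 5*ε := by
    have h := mul_le_mul_of_nonneg_right hcube125 hρ0.le
    linarith only [h, hρ4]
  have hy3b : ((1+ε)*ρ)^3 ≤ 5*ε*ρ^2 := by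
    linarith only [mul_le_mul_of_nonneg_right hstep3 (sq_nonneg ρ)]
  have hquart : (1+ε)^4 ≤ 3/2 := by
    have h := mul_le_mul_of_nonneg_right hcube125 (by linarith : (0:ℝ) ≤ 1+ε)
    linarith only [h, hε100, hε]
  have hρsq : ρ^2 ≤ 16*ε^2 := by
    have h := mul_self_le_mul_self hρ0.le hρ4
    linarith only [h]
  have hstep4 : (1+ε)^4*ρ^2 ≤ ε := by
    have h := mul_le_mul_of_nonneg_right hquart (sq_nonneg ρ)
    linarith only [h, hρsq, hε2, hε.le]
  have hy4b : ((1+ε)*ρ)^4 ≤ ε*ρ^2 := by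
    linarith only [mul_le_mul_of_nonneg_right hstep4 (sq_nonneg ρ)]
  have h1 : ((1+ε)*ρ)^2/2 - ((1+ε)*ρ)^3/6 - ((1+ε)*ρ)^4/6 ≤ ε*ρ := by
    linarith only [hkey, he1.1]
  have h4 : ρ^2 + 2*ε*ρ^2 ≤ ((1+ε)*ρ)^2 := by
    linarith only [mul_nonneg (sq_nonneg ε) (sq_nonneg ρ)]
  have hhalf : ρ^2/2 ≤ ε*ρ := by linarith only [h1, h4, hy3b, hy4b]
  have hρup : ρ ≤ 2*ε := by nlinarith [hhalf, hρ0]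
  have g1 : ε*ρ ≤ ((1+ε)*ρ)^2/2 + ((1+ε)*ρ)^4/6 := by
    have hcb : (0:ℝ) ≤ ((1+ε)*ρ)^3 := by positivity
    linarith only [hkey, he1.2, hcb]
  have g2 : ((1+ε)*ρ)^2 ≤ ρ^2 + 3*ε*ρ^2 := by
    have h := mul_le_mul_of_nonneg_right hε2 (sq_nonneg ρ)
    linarith only [h, mul_nonneg hε.le (sq_nonneg ρ)]
  have glow : ε*ρ ≤ ρ^2/2 + (5/3)*(ε*ρ^2) := by linarith only [g1, g2, hy4b]
  have hρρ : (ε*ρ)*ρ ≤ (ε*ρ)*(2*ε) := mul_le_mul_of_nonneg_left hρup (mul_pos hε hρ0).le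
  have glow2 : ε*ρ ≤ ρ^2/2 + (10/3)*(ε*ε*ρ) := by linarith only [glow, hρρ]
  have hρlow : 2*ε - 11*ε^2 ≤ ρ := by
    nlinarith [glow2, mul_pos (mul_pos hε hε) hρ0, hρ0, mul_pos hε hρ0]
  -- the scaled variable s
  obtain ⟨s, hsdef⟩ : ∃ x:ℝ, x = ((1+ε)*ρ)/a := ⟨_, rfl⟩
  have has : a * s = (1+ε)*ρ := by rw [hsdef]; field_simp
  have hs0 : 0 < s := by
    rw [hsdef]; exact div_pos (by positivity) ha0p
  have hερ : ε*ρ ≤ ε*(2*ε) := mul_le_mul_of_nonneg_left hρup hε.le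
  have hasu : a*s ≤ 2*ε + 11*ε^2 := by
    rw [has]; linarith only [hρup, hερ, sq_nonneg ε]
  have hasl : 2*ε - 11*ε^2 ≤ a*s := by
    rw [has]; linarith only [hρlow, (mul_pos hε hρ0).le]
  have has3 : a*s ≤ 3*ε := by linarith only [hasu, hε2, hε.le]
  have hs_le_as : s ≤ a*s := by
    linarith only [mul_nonneg (by linarith : (0:ℝ) ≤ a - 1) hs0.le]
  have hs3 : s ≤ 3*ε := le_trans hs_le_as has3
  -- error terms e2, e3
  have hrs6 : (a+1)*s ≤ 6*ε := by
    linarith only [mul_nonneg (by linarith : (0:ℝ) ≤ a - 1) hs0.le, has3]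
  have hrs1 : (a+1)*s ≤ 1 := by linarith only [hrs6, hε100, hε]
  have hrs0 : (0:ℝ) ≤ (a+1)*s := by positivity
  obtain ⟨e2, he2def⟩ : ∃ x:ℝ, x = Real.exp (-((a+1)*s)) - (1 - (a+1)*s + ((a+1)*s)^2/2 - ((a+1)*s)^3/6) := ⟨_, rfl⟩
  have he2 : |e2| ≤ ((a+1)*s)^4/6 := by rw [he2def]; exact exp_cubic_bound hrs0 hrs1
  rw [abs_le] at he2
  obtain ⟨e3, he3def⟩ : ∃ x:ℝ, x = Real.exp (-s) - (1 - s + s^2/2 - s^3/6) := ⟨_, rfl⟩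
  have he3 : |e3| ≤ s^4/6 := by rw [he3def]; exact exp_cubic_bound hs0.le (by linarith only [hs3, hε100, hε])
  rw [abs_le] at he3
  -- rewrite ρr
  have hρr' : 1 - ρr = Real.exp (-s) := by
    rw [hρr, hρeq, Real.rpow_def_of_pos (Real.exp_pos _), Real.log_exp]
    congr 1
    rw [hsdef]; field_simp
  have hpow : (1 - ρr)^r = Real.exp (-((a+1)*s)) := by
    rw [hρr', ← Real.exp_nat_mul]
    congr 1
    rw [hra]; ring
  have hρr2 : ρr = 1 - Real.exp (-s) := by linarith only [hρr']
  rw [hpow, hρr2, show ((r:ℝ)-1) = a from ha.symm, hra]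
  -- pass to the cleared form
  have hU : (1+ε)/(a+1) * (1 - Real.exp (-((a+1)*s))) - (1 - Real.exp (-s))
        - 2/(3*a^2)*ε^3
      = (a^3*((1+ε)*(1 - Real.exp (-((a+1)*s))) - (a+1)*(1 - Real.exp (-s)))
          - 2*(a+1)*a*ε^3/3) / ((a+1)*a^3) := by
    field_simp
  rw [hU, abs_div, abs_of_pos (mul_pos ha1p (pow_pos ha0p 3)),
    div_le_iff₀ (mul_pos ha1p (pow_pos ha0p 3))]
  -- the key algebraic identity
  have hC1 : ε*(a*s) = (1+ε)*((a*s)^2/2 - (a*s)^3/6 + e1) := by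
    rw [has, he1def]; ring
  have hE2 : Real.exp (-((a+1)*s))
      = 1 - (a+1)*s + ((a+1)*s)^2/2 - ((a+1)*s)^3/6 + e2 := by rw [he2def]; ring
  have hE3 : Real.exp (-s) = 1 - s + s^2/2 - s^3/6 + e3 := by rw [he3def]; ring
  have hUid : a^3*((1+ε)*(1 - Real.exp (-((a+1)*s))) - (a+1)*(1 - Real.exp (-s)))
      = a^4*(a+1)*s^3/12
        - (a^4*(a+1)/4 + a^5*(a+1)/6)*ε*s^3
        + a^3*(a+1)^3*ε*s^3/6
        + a^5*(a+1)*(1+ε)*s^4/12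
        + a^2*(a+1)*(1+ε)*(1-s/2)*e1
        - a^3*(1+ε)*e2
        + a^3*(a+1)*e3 := by
    rw [hE2, hE3]
    linear_combination (a^2*(a+1)*(1 - s/2)) * hC1
  -- power bounds
  have has0 : (0:ℝ) ≤ a*s := (mul_pos ha0p hs0).le
  have hq3 : (a*s)^3 ≤ 27*ε^3 := by
    calc (a*s)^3 ≤ (3*ε)^3 := pow_le_pow_left₀ has0 has3 3
      _ = 27*ε^3 := by ring
  have hq4 : (a*s)^4 ≤ 81*ε^4 := by
    calc (a*s)^4 ≤ (3*ε)^4 := pow_le_pow_left₀ has0 has3 4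
      _ = 81*ε^4 := by ring
  have hq2 : (a*s)^2 ≤ 9*ε^2 := by
    calc (a*s)^2 ≤ (3*ε)^2 := pow_le_pow_left₀ has0 has3 2
      _ = 9*ε^2 := by ring
  have hq24 : ((a+1)*s)^4 ≤ 1296*ε^4 := by
    calc ((a+1)*s)^4 ≤ (6*ε)^4 := pow_le_pow_left₀ hrs0 hrs6 4
      _ = 1296*ε^4 := by ring
  have hs4 : s^4 ≤ 81*ε^4 := by
    calc s^4 ≤ (3*ε)^4 := pow_le_pow_left₀ hs0.le hs3 4
      _ = 81*ε^4 := by ring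
  -- numeric bounds for the error terms
  have hasρ : ((1+ε)*ρ)^4 ≤ 81*ε^4 := by rw [← has]; exact hq4
  have he1u : e1 ≤ 14*ε^4 := by linarith only [he1.2, hasρ, hε4p]
  have he1l : -(14*ε^4) ≤ e1 := by linarith only [he1.1, hasρ, hε4p]
  have he2u : e2 ≤ 216*ε^4 := by linarith only [he2.2, hq24, hε4p]
  have he2l : -(216*ε^4) ≤ e2 := by linarith only [he2.1, hq24, hε4p]
  have he3u : e3 ≤ 14*ε^4 := by linarith only [he3.2, hs4, hε4p]
  have he3l : -(14*ε^4) ≤ e3 := by linarith only [he3.1, hs4, hε4p]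
  -- auxiliary power facts for a
  have haa3 : a ≤ a^3 := by
    linarith only [mul_nonneg (mul_nonneg ha0p.le (by linarith : (0:ℝ) ≤ a-1)) (by linarith : (0:ℝ) ≤ a+1)]
  have haa23 : a^2 ≤ a^3 := by
    linarith only [mul_nonneg (sq_nonneg a) (by linarith : (0:ℝ) ≤ a-1)]
  have hε4 : (0:ℝ) < ε^4 := by positivity
  have hZ : (0:ℝ) ≤ (a+1)*(a^3*ε^4) := by positivity
  -- bound each term
  have hT1 : (a^4*(a+1)/4 + a^5*(a+1)/6)*ε*s^3 ≤ 12*(a+1)*a^3*ε^4 := by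
    have h2 : a*(a*s)^3 ≤ a*(27*ε^3) := mul_le_mul_of_nonneg_left hq3 ha0p.le
    have h3 : a^2*(a*s)^3 ≤ a^2*(27*ε^3) := mul_le_mul_of_nonneg_left hq3 (by positivity)
    have h4 : ((a+1)*ε/4)*(a*(a*s)^3) ≤ ((a+1)*ε/4)*(a*(27*ε^3)) :=
      mul_le_mul_of_nonneg_left h2 (by positivity)
    have h5 : ((a+1)*ε/6)*(a^2*(a*s)^3) ≤ ((a+1)*ε/6)*(a^2*(27*ε^3)) :=
      mul_le_mul_of_nonneg_left h3 (by positivity)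
    have h6a := mul_le_mul_of_nonneg_left haa3 (show (0:ℝ) ≤ (a+1)*ε^4*(27/4) by positivity)
    have h6b := mul_le_mul_of_nonneg_left haa23 (show (0:ℝ) ≤ (a+1)*ε^4*(27/6) by positivity)
    linarith only [h4, h5, h6a, h6b, hZ]
  have hT1pos : 0 ≤ (a^4*(a+1)/4 + a^5*(a+1)/6)*ε*s^3 := by positivity
  have hT2 : a^3*(a+1)^3*ε*s^3/6 ≤ 18*(a+1)*a^3*ε^4 := by
    have h2 : ((a+1)^3*ε/6)*(a*s)^3 ≤ ((a+1)^3*ε/6)*(27*ε^3) :=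
      mul_le_mul_of_nonneg_left hq3 (by positivity)
    have h4 : (a+1)^2 ≤ 4*a^2 := by
      linarith only [mul_nonneg (by linarith : (0:ℝ) ≤ 3*a+1) (by linarith : (0:ℝ) ≤ a-1)]
    have h5 : (a+1)^2*((a+1)*ε^4*(27/6)) ≤ (4*a^2)*((a+1)*ε^4*(27/6)) :=
      mul_le_mul_of_nonneg_right h4 (by positivity)
    have h6 := mul_le_mul_of_nonneg_left haa23 (show (0:ℝ) ≤ (a+1)*ε^4*18 by positivity)
    linarith only [h2, h5, h6, hZ]
  have hT2pos : 0 ≤ a^3*(a+1)^3*ε*s^3/6 := by positivity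
  have hT3 : a^5*(a+1)*(1+ε)*s^4/12 ≤ 14*(a+1)*a^3*ε^4 := by
    have h2 : (a*(a+1)*(1+ε)/12)*(a*s)^4 ≤ (a*(a+1)*(1+ε)/12)*(81*ε^4) :=
      mul_le_mul_of_nonneg_left hq4 (by positivity)
    have hA : a*(a+1)*(1+ε) ≤ 2*(a*(a+1)) := by
      linarith only [mul_nonneg (mul_pos ha0p ha1p).le (by linarith : (0:ℝ) ≤ 1-ε)]
    have h3 : (a*(a+1)*(1+ε))*(81/12*ε^4) ≤ (2*(a*(a+1)))*(81/12*ε^4) :=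
      mul_le_mul_of_nonneg_right hA (by positivity)
    have h6 := mul_le_mul_of_nonneg_left haa3 (show (0:ℝ) ≤ (a+1)*ε^4*(27/2) by positivity)
    linarith only [h2, h3, h6, hZ]
  have hT3pos : 0 ≤ a^5*(a+1)*(1+ε)*s^4/12 := by positivity
  -- T4 : coefficient times e1
  have hs12 : (0:ℝ) ≤ 1 - s/2 := by linarith only [hs3, hε100, hε]
  have hc4pos : 0 ≤ a^2*(a+1)*(1+ε)*(1-s/2) :=
    mul_nonneg (by positivity) hs12
  have hc4b : a^2*(a+1)*(1+ε)*(1-s/2) ≤ 2*(a^2*(a+1)) := by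
    have h1 : a^2*(a+1)*(1+ε)*(1-s/2) ≤ a^2*(a+1)*(1+ε)*1 :=
      mul_le_mul_of_nonneg_left (by linarith) (by positivity)
    linarith only [h1, mul_nonneg (mul_pos (pow_pos ha0p 2) ha1p).le (by linarith : (0:ℝ) ≤ 1-ε)]
  have hT4u : a^2*(a+1)*(1+ε)*(1-s/2)*e1 ≤ 28*(a+1)*a^3*ε^4 := by
    have h2 : a^2*(a+1)*(1+ε)*(1-s/2)*e1 ≤ a^2*(a+1)*(1+ε)*(1-s/2)*(14*ε^4) :=
      mul_le_mul_of_nonneg_left he1u hc4pos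
    have h3 : a^2*(a+1)*(1+ε)*(1-s/2)*(14*ε^4) ≤ (2*(a^2*(a+1)))*(14*ε^4) :=
      mul_le_mul_of_nonneg_right hc4b (by positivity)
    have h6 := mul_le_mul_of_nonneg_left haa23 (show (0:ℝ) ≤ (a+1)*ε^4*28 by positivity)
    linarith only [h2, h3, h6, hZ]
  have hT4l : -(28*(a+1)*a^3*ε^4) ≤ a^2*(a+1)*(1+ε)*(1-s/2)*e1 := by
    have h2 : a^2*(a+1)*(1+ε)*(1-s/2)*(-(14*ε^4)) ≤ a^2*(a+1)*(1+ε)*(1-s/2)*e1 :=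
      mul_le_mul_of_nonneg_left he1l hc4pos
    have h3 : (2*(a^2*(a+1)))*(-(14*ε^4)) ≤ a^2*(a+1)*(1+ε)*(1-s/2)*(-(14*ε^4)) := by
      linarith only [mul_le_mul_of_nonneg_right hc4b (show (0:ℝ) ≤ 14*ε^4 by positivity)]
    have h6 := mul_le_mul_of_nonneg_left haa23 (show (0:ℝ) ≤ (a+1)*ε^4*28 by positivity)
    linarith only [h2, h3, h6, hZ]
  -- T5 : a^3*(1+ε)*e2
  have h5e : a^3*(ε^4*ε) ≤ a^3*ε^4 := by
    have : ε^4*ε ≤ ε^4 := by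
      linarith only [mul_nonneg (le_of_lt hε4) (by linarith : (0:ℝ) ≤ 1-ε)]
    exact mul_le_mul_of_nonneg_left this (by positivity)
  have ha2e : 2*(a^3*ε^4) ≤ (a+1)*(a^3*ε^4) :=
    mul_le_mul_of_nonneg_right (by linarith : (2:ℝ) ≤ a+1) (by positivity)
  have hT5u : a^3*(1+ε)*e2 ≤ 219*(a+1)*a^3*ε^4 := by
    have h2 : a^3*(1+ε)*e2 ≤ a^3*(1+ε)*(216*ε^4) :=
      mul_le_mul_of_nonneg_left he2u (by positivity)
    linarith only [h2, h5e, ha2e, hZ]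
  have hT5l : -(219*(a+1)*a^3*ε^4) ≤ a^3*(1+ε)*e2 := by
    have h2 : a^3*(1+ε)*(-(216*ε^4)) ≤ a^3*(1+ε)*e2 :=
      mul_le_mul_of_nonneg_left he2l (by positivity)
    linarith only [h2, h5e, ha2e, hZ]
  -- T6 : a^3*(a+1)*e3
  have hT6u : a^3*(a+1)*e3 ≤ 14*(a+1)*a^3*ε^4 := by
    have h2 : a^3*(a+1)*e3 ≤ a^3*(a+1)*(14*ε^4) :=
      mul_le_mul_of_nonneg_left he3u (by positivity)
    linarith only [h2]
  have hT6l : -(14*(a+1)*a^3*ε^4) ≤ a^3*(a+1)*e3 := by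
    have h2 : a^3*(a+1)*(-(14*ε^4)) ≤ a^3*(a+1)*e3 :=
      mul_le_mul_of_nonneg_left he3l (by positivity)
    linarith only [h2]
  -- main term
  have hfac : (a*s)^3 - 8*ε^3 = ((a*s) - 2*ε)*((a*s)^2 + (a*s)*(2*ε) + 4*ε^2) := by ring
  have hFpos : (0:ℝ) ≤ (a*s)^2 + (a*s)*(2*ε) + 4*ε^2 := by positivity
  have hFup : (a*s)^2 + (a*s)*(2*ε) + 4*ε^2 ≤ 19*ε^2 := by
    have h := mul_le_mul_of_nonneg_right has3 (by positivity : (0:ℝ) ≤ 2*ε)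
    linarith only [hq2, h]
  have hMabs_u : (a*s)^3 - 8*ε^3 ≤ 209*ε^4 := by
    rw [hfac]
    have h1 : ((a*s) - 2*ε)*((a*s)^2 + (a*s)*(2*ε) + 4*ε^2)
        ≤ (11*ε^2)*((a*s)^2 + (a*s)*(2*ε) + 4*ε^2) :=
      mul_le_mul_of_nonneg_right (by linarith only [hasu]) hFpos
    have h2 := mul_le_mul_of_nonneg_left hFup (show (0:ℝ) ≤ 11*ε^2 by positivity)
    linarith only [h1, h2]
  have hMabs_l : -(209*ε^4) ≤ (a*s)^3 - 8*ε^3 := by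
    rw [hfac]
    have h1 : (-(11*ε^2))*((a*s)^2 + (a*s)*(2*ε) + 4*ε^2)
        ≤ ((a*s) - 2*ε)*((a*s)^2 + (a*s)*(2*ε) + 4*ε^2) :=
      mul_le_mul_of_nonneg_right (by linarith only [hasl]) hFpos
    have h2 := mul_le_mul_of_nonneg_left hFup (show (0:ℝ) ≤ 11*ε^2 by positivity)
    linarith only [h1, h2]
  have hMu : a^4*(a+1)*s^3/12 - 2*(a+1)*a*ε^3/3 ≤ 18*(a+1)*a^3*ε^4 := by
    have h1 : ((a+1)*a/12)*((a*s)^3 - 8*ε^3) ≤ ((a+1)*a/12)*(209*ε^4) :=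
      mul_le_mul_of_nonneg_left hMabs_u (by positivity)
    have h6 := mul_le_mul_of_nonneg_left haa3 (show (0:ℝ) ≤ (a+1)*ε^4*(209/12) by positivity)
    linarith only [h1, h6, hZ]
  have hMl : -(18*(a+1)*a^3*ε^4) ≤ a^4*(a+1)*s^3/12 - 2*(a+1)*a*ε^3/3 := by
    have h1 : ((a+1)*a/12)*(-(209*ε^4)) ≤ ((a+1)*a/12)*((a*s)^3 - 8*ε^3) :=
      mul_le_mul_of_nonneg_left hMabs_l (by positivity)
    have h6 := mul_le_mul_of_nonneg_left haa3 (show (0:ℝ) ≤ (a+1)*ε^4*(209/12) by positivity)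
    linarith only [h1, h6, hZ]
  -- final assembly
  have hfin : 330*((a+1)*a^3)*ε^4 ≤ δ*ε^3*((a+1)*a^3) := by
    have hp : (0:ℝ) ≤ (a+1)*a^3*ε^3 := by positivity
    linarith only [mul_le_mul_of_nonneg_right hεδ hp, hZ]
  rw [hUid, abs_le]
  constructor
  · linarith only [hT1, hT1pos, hT2, hT2pos, hT3, hT3pos, hT4u, hT4l, hT5u, hT5l,
      hT6u, hT6l, hMu, hMl, hfin]
  · linarith only [hT1, hT1pos, hT2, hT2pos, hT3, hT3pos, hT4u, hT4l, hT5u, hT5l,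
      hT6u, hT6l, hMu, hMl, hfin]
end

section
/- Let k > 0. There is a constant K = K(k) such that: if Y ~ Bin(n, p) with np ≤ ν ≤ k, and X is a nonnegative random variable with mean μ that is stochastically dominated by kY, then for all θ ∈ [-1, 1], E[(X - μ)² e^{θ(X - μ)}] ≤ Kν. -/
/-!
Stochastic domination transfers to `E[G(X)]` for every `G(x) = ∫₀ˣ g` with `g ≥ 0`, through the
layer-cake formula `E[G(X)] = ∫₀^∞ g(t) P(X ≥ t) dt`. For `G(x) = e^{cx} - 1` this gives
`E[e^{cX} - 1] ≤ ∑ₘ P(Y = m) (e^{ckm} - 1)`; the `m = 0` term vanishes, and for `m ≥ 1`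
`P(Y = m) ≤ (np)^m / m! ≤ ν k^{m-1} / m!`, so the sum is at most `(ν / k) exp (k e^{ck})`.
The case `c = 1` bounds the mean, `μ₀ ≤ E[e^X - 1] = O(ν)`. For `x ≥ 0` and `|θ| ≤ 1`,
`(x - μ₀)² e^{θ(x - μ₀)} ≤ e^{μ₀} ((1 + μ₀²)(e^{3x} - 1) + μ₀²)`, and the case `c = 3` together
with `μ₀² = O(ν)` finishes the proof.
-/

open MeasureTheory Set Real
open scoped Nat ENNReal

section StochasticDomination

variable {Ω Ω' : Type*} [MeasurableSpace Ω] [MeasurableSpace Ω'] {μ : Measure Ω} {μ' : Measure Ω'}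

theorem lintegral_primitive_le_of_meas_le {g : ℝ → ℝ} {X : Ω → ℝ} {Z : Ω' → ℝ}
    (hX0 : 0 ≤ᵐ[μ] X) (hX : AEMeasurable X μ) (hZ0 : 0 ≤ᵐ[μ'] Z) (hZ : AEMeasurable Z μ')
    (g_intble : ∀ t > 0, IntervalIntegrable g volume 0 t)
    (g_nn : ∀ᵐ t ∂volume.restrict (Ioi 0), 0 ≤ g t)
    (hdom : ∀ t > 0, μ {ω | t ≤ X ω} ≤ μ' {ω | t ≤ Z ω}) :
    ∫⁻ ω, ENNReal.ofReal (∫ t in 0..X ω, g t) ∂μ ≤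
      ∫⁻ ω, ENNReal.ofReal (∫ t in 0..Z ω, g t) ∂μ' := by
  rw [lintegral_comp_eq_lintegral_meas_le_mul μ hX0 hX g_intble g_nn,
    lintegral_comp_eq_lintegral_meas_le_mul μ' hZ0 hZ g_intble g_nn]
  exact setLIntegral_mono' measurableSet_Ioi fun t ht => mul_le_mul_left (hdom t ht) _

theorem integral_mul_exp_mul (c x : ℝ) : ∫ t in 0..x, c * exp (c * t) = exp (c * x) - 1 := by
  rw [intervalIntegral.integral_const_mul, intervalIntegral.mul_integral_comp_mul_left,
    integral_exp, mul_zero, exp_zero]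

theorem lintegral_exp_mul_sub_one_le_of_meas_le {X : Ω → ℝ} {Z : Ω' → ℝ}
    (hX0 : 0 ≤ᵐ[μ] X) (hX : AEMeasurable X μ) (hZ0 : 0 ≤ᵐ[μ'] Z) (hZ : AEMeasurable Z μ')
    (hdom : ∀ t > 0, μ {ω | t ≤ X ω} ≤ μ' {ω | t ≤ Z ω}) {c : ℝ} (hc : 0 ≤ c) :
    ∫⁻ ω, ENNReal.ofReal (exp (c * X ω) - 1) ∂μ ≤
      ∫⁻ ω, ENNReal.ofReal (exp (c * Z ω) - 1) ∂μ' := by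
  simpa only [integral_mul_exp_mul] using
    lintegral_primitive_le_of_meas_le (g := fun t => c * exp (c * t)) hX0 hX hZ0 hZ
      (fun _ _ => (by fun_prop : Continuous _).intervalIntegrable _ _)
      (ae_of_all _ fun _ => by positivity) hdom

end StochasticDomination

section NatLaw

variable {Ω : Type*} [MeasurableSpace Ω]

/-- The law of `Y` built from its point masses; unlike `μ.map Y`, it needs no measurability
of `Y`. -/
noncomputable def natLaw (μ : Measure Ω) (Y : Ω → ℕ) : Measure ℕ :=
  Measure.sum fun m => μ {ω | Y ω = m} • Measure.dirac m

theorem measure_preimage_le_natLaw (μ : Measure Ω) (Y : Ω → ℕ) (s : Set ℕ) :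
    μ (Y ⁻¹' s) ≤ natLaw μ Y s :=
  calc μ (Y ⁻¹' s) ≤ μ (⋃ m : s, {ω | Y ω = m}) :=
        measure_mono fun ω hω => mem_iUnion.2 ⟨⟨Y ω, hω⟩, rfl⟩
    _ ≤ ∑' m : s, μ {ω | Y ω = m} := measure_iUnion_le _
    _ = natLaw μ Y s := by
        rw [tsum_subtype s fun m => μ {ω | Y ω = m}, natLaw,
          Measure.sum_apply _ MeasurableSet.of_discrete]
        refine tsum_congr fun m => ?_
        by_cases hm : m ∈ s <;> simp [hm]

theorem lintegral_natLaw (μ : Measure Ω) (Y : Ω → ℕ) (f : ℕ → ℝ≥0∞) :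
    ∫⁻ m, f m ∂natLaw μ Y = ∑' m, μ {ω | Y ω = m} * f m := by
  simp only [natLaw, lintegral_sum_measure, lintegral_smul_measure, lintegral_dirac, smul_eq_mul]

end NatLaw

theorem ENNReal.tsum_ofReal_mul_pow_div_factorial {a x : ℝ} (ha : 0 ≤ a) (hx : 0 ≤ x) :
    ∑' m : ℕ, ENNReal.ofReal (a * (x ^ m / m !)) = ENNReal.ofReal (a * exp x) := by
  rw [exp_eq_exp_ℝ, ← (NormedSpace.expSeries_div_hasSum_exp x).tsum_eq, ← tsum_mul_left]
  exact (ENNReal.ofReal_tsum_of_nonneg (fun m => by positivity)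
    ((Real.summable_pow_div_factorial x).mul_left a)).symm

section Binomial

variable {n : ℕ} {p ν k : ℝ}

theorem choose_mul_pow_mul_pow_le (hp0 : 0 ≤ p) (hp1 : p ≤ 1) (m : ℕ) :
    (n.choose m : ℝ) * p ^ m * (1 - p) ^ (n - m) ≤ (n * p) ^ m / m ! :=
  calc (n.choose m : ℝ) * p ^ m * (1 - p) ^ (n - m) ≤ (n ^ m / m !) * p ^ m * 1 := by
        gcongr
        · exact Nat.choose_le_pow_div m n
        · exact pow_le_one₀ (sub_nonneg.2 hp1) (by linarith)
    _ = (n * p) ^ m / m ! := by ring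

theorem choose_mul_pow_mul_pow_mul_exp_sub_one_le (hp0 : 0 ≤ p) (hp1 : p ≤ 1)
    (hnp : n * p ≤ ν) (hνk : ν ≤ k) (hk : 0 < k) {c : ℝ} (hc : 0 ≤ c) (m : ℕ) :
    (n.choose m : ℝ) * p ^ m * (1 - p) ^ (n - m) * (exp (c * (k * m)) - 1) ≤
      ν / k * ((k * exp (c * k)) ^ m / m !) := by
  have hν0 : 0 ≤ ν := (by positivity : 0 ≤ (n : ℝ) * p).trans hnp
  cases m with
  | zero => simp only [Nat.cast_zero, mul_zero, exp_zero, sub_self]; positivity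
  | succ j =>
    have hexp : exp (c * (k * (j + 1 : ℕ))) - 1 ≤ exp (c * k) ^ (j + 1) := by
      rw [← exp_nat_mul, show ((j + 1 : ℕ) : ℝ) * (c * k) = c * (k * (j + 1 : ℕ)) by ring]
      linarith
    have hpow : (n * p) ^ (j + 1) ≤ ν * k ^ j :=
      calc (n * p) ^ (j + 1) ≤ ν ^ (j + 1) := by gcongr
        _ ≤ ν * k ^ j := by rw [pow_succ']; gcongr
    calc (n.choose (j + 1) : ℝ) * p ^ (j + 1) * (1 - p) ^ (n - (j + 1)) *
          (exp (c * (k * (j + 1 : ℕ))) - 1)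
        ≤ (n * p) ^ (j + 1) / (j + 1)! * exp (c * k) ^ (j + 1) := by
          gcongr
          · exact sub_nonneg.2 (one_le_exp (by positivity))
          · exact choose_mul_pow_mul_pow_le hp0 hp1 _
      _ ≤ ν * k ^ j / (j + 1)! * exp (c * k) ^ (j + 1) := by gcongr
      _ = ν / k * ((k * exp (c * k)) ^ (j + 1) / (j + 1)!) := by
          field_simp
          ring

end Binomial

theorem lintegral_exp_mul_sub_one_le_of_binomial_domination
    {Ω Ω' : Type*} [MeasurableSpace Ω] [MeasurableSpace Ω'] {μ : Measure Ω} {μ' : Measure Ω'}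
    {n : ℕ} {p ν k : ℝ} {Y : Ω' → ℕ} {X : Ω → ℝ}
    (hp0 : 0 ≤ p) (hp1 : p ≤ 1) (hnp : n * p ≤ ν) (hνk : ν ≤ k) (hk : 0 < k)
    (hY : ∀ m : ℕ, μ' {ω | Y ω = m} =
      ENNReal.ofReal ((n.choose m : ℝ) * p ^ m * (1 - p) ^ (n - m)))
    (hX0 : ∀ ω, 0 ≤ X ω) (hX : AEMeasurable X μ)
    (hdom : ∀ x : ℝ, μ {ω | x ≤ X ω} ≤ μ' {ω | x ≤ k * (Y ω : ℝ)}) {c : ℝ} (hc : 0 ≤ c) :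
    ∫⁻ ω, ENNReal.ofReal (exp (c * X ω) - 1) ∂μ ≤
      ENNReal.ofReal (ν * (exp (k * exp (c * k)) / k)) := by
  have hν0 : 0 ≤ ν := (by positivity : 0 ≤ (n : ℝ) * p).trans hnp
  have hdom' : ∀ t > 0, μ {ω | t ≤ X ω} ≤ natLaw μ' Y {m | t ≤ k * m} := fun t _ =>
    (hdom t).trans (measure_preimage_le_natLaw μ' Y {m | t ≤ k * m})
  calc ∫⁻ ω, ENNReal.ofReal (exp (c * X ω) - 1) ∂μ
      ≤ ∫⁻ m, ENNReal.ofReal (exp (c * (k * m)) - 1) ∂natLaw μ' Y :=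
        lintegral_exp_mul_sub_one_le_of_meas_le (ae_of_all _ hX0) hX
          (ae_of_all _ fun m => by positivity) (measurable_of_countable _).aemeasurable hdom' hc
    _ = ∑' m : ℕ, ENNReal.ofReal ((n.choose m : ℝ) * p ^ m * (1 - p) ^ (n - m) *
          (exp (c * (k * m)) - 1)) := by
        rw [lintegral_natLaw]
        refine tsum_congr fun m => ?_
        rw [hY, ← ENNReal.ofReal_mul (by have := sub_nonneg.2 hp1; positivity)]
    _ ≤ ∑' m : ℕ, ENNReal.ofReal (ν / k * ((k * exp (c * k)) ^ m / m !)) :=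
        ENNReal.tsum_le_tsum fun m => ENNReal.ofReal_le_ofReal
          (choose_mul_pow_mul_pow_mul_exp_sub_one_le hp0 hp1 hnp hνk hk hc m)
    _ = ENNReal.ofReal (ν * (exp (k * exp (c * k)) / k)) :=
        (ENNReal.tsum_ofReal_mul_pow_div_factorial (by positivity) (by positivity)).trans
          (congrArg ENNReal.ofReal (by ring))

theorem integral_le_of_binomial_domination
    {Ω Ω' : Type*} [MeasurableSpace Ω] [MeasurableSpace Ω'] {μ : Measure Ω} {μ' : Measure Ω'}
    {n : ℕ} {p ν k : ℝ} {Y : Ω' → ℕ} {X : Ω → ℝ}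
    (hp0 : 0 ≤ p) (hp1 : p ≤ 1) (hnp : n * p ≤ ν) (hνk : ν ≤ k) (hk : 0 < k)
    (hY : ∀ m : ℕ, μ' {ω | Y ω = m} =
      ENNReal.ofReal ((n.choose m : ℝ) * p ^ m * (1 - p) ^ (n - m)))
    (hX0 : ∀ ω, 0 ≤ X ω) (hX : Integrable X μ)
    (hdom : ∀ x : ℝ, μ {ω | x ≤ X ω} ≤ μ' {ω | x ≤ k * (Y ω : ℝ)}) :
    ∫ ω, X ω ∂μ ≤ ν * (exp (k * exp k) / k) := by
  have hν0 : 0 ≤ ν := (by positivity : 0 ≤ (n : ℝ) * p).trans hnp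
  refine (ENNReal.ofReal_le_ofReal_iff (by positivity)).1 ?_
  calc ENNReal.ofReal (∫ ω, X ω ∂μ) = ∫⁻ ω, ENNReal.ofReal (X ω) ∂μ :=
        ofReal_integral_eq_lintegral_ofReal hX (ae_of_all _ hX0)
    _ ≤ ∫⁻ ω, ENNReal.ofReal (exp (1 * X ω) - 1) ∂μ :=
        lintegral_mono fun ω => ENNReal.ofReal_le_ofReal <| by
          rw [one_mul]; linarith [add_one_le_exp (X ω)]
    _ ≤ ENNReal.ofReal (ν * (exp (k * exp k) / k)) := by
        simpa only [one_mul] using lintegral_exp_mul_sub_one_le_of_binomial_domination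
          hp0 hp1 hnp hνk hk hY hX0 hX.aemeasurable hdom zero_le_one

theorem sq_mul_exp_le_exp_three_mul_sub_one {x : ℝ} (hx : 0 ≤ x) :
    x ^ 2 * exp x ≤ exp (3 * x) - 1 := by
  have h1 : x ≤ exp x - 1 := by linarith [add_one_le_exp x]
  have h2 : x ≤ exp x := by linarith
  calc x ^ 2 * exp x = x * x * exp x := by ring
    _ ≤ (exp x - 1) * exp x * exp x := by gcongr; exact hx.trans h1
    _ = exp (3 * x) - exp (2 * x) := by
        rw [show 3 * x = x + x + x by ring, show 2 * x = x + x by ring, exp_add, exp_add]; ring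
    _ ≤ exp (3 * x) - 1 := by linarith [one_le_exp (by positivity : 0 ≤ 2 * x)]

theorem sq_sub_mul_exp_mul_sub_le {x m M θ : ℝ} (hx : 0 ≤ x) (hm : 0 ≤ m) (hmM : m ≤ M)
    (hθ₁ : -1 ≤ θ) (hθ₂ : θ ≤ 1) :
    (x - m) ^ 2 * exp (θ * (x - m)) ≤ exp M * ((1 + M ^ 2) * (exp (3 * x) - 1) + m ^ 2) := by
  have hθ : exp (θ * (x - m)) ≤ exp M * exp x := by
    rw [← exp_add]; gcongr; nlinarith
  have hsq : (x - m) ^ 2 ≤ x ^ 2 + m ^ 2 := by nlinarith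
  have hm2 : m ^ 2 * (exp x - 1) ≤ M ^ 2 * (exp (3 * x) - 1) := by
    gcongr
    · linarith [one_le_exp hx]
    · linarith
  calc (x - m) ^ 2 * exp (θ * (x - m)) ≤ (x ^ 2 + m ^ 2) * (exp M * exp x) := by gcongr
    _ = exp M * (x ^ 2 * exp x + m ^ 2 * (exp x - 1) + m ^ 2) := by ring
    _ ≤ exp M * ((1 + M ^ 2) * (exp (3 * x) - 1) + m ^ 2) := by
        gcongr
        linarith [sq_mul_exp_le_exp_three_mul_sub_one hx]

theorem lintegral_ofReal_mul_add_le {Ω : Type*} [MeasurableSpace Ω] {μ : Measure Ω}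
    [IsProbabilityMeasure μ] (f : Ω → ℝ) {a : ℝ} (ha : 0 ≤ a) (b : ℝ) :
    ∫⁻ ω, ENNReal.ofReal (a * f ω + b) ∂μ ≤
      ENNReal.ofReal a * ∫⁻ ω, ENNReal.ofReal (f ω) ∂μ + ENNReal.ofReal b :=
  calc ∫⁻ ω, ENNReal.ofReal (a * f ω + b) ∂μ
      ≤ ∫⁻ ω, ENNReal.ofReal a * ENNReal.ofReal (f ω) + ENNReal.ofReal b ∂μ :=
        lintegral_mono fun ω => (ENNReal.ofReal_add_le).trans_eq (by rw [ENNReal.ofReal_mul ha])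
    _ = ENNReal.ofReal a * ∫⁻ ω, ENNReal.ofReal (f ω) ∂μ + ENNReal.ofReal b := by
        rw [lintegral_add_right _ measurable_const, lintegral_const_mul' _ _ ENNReal.ofReal_ne_top,
          lintegral_const, measure_univ, mul_one]

/-- Let k > 0. There is a constant K = K(k) such that: if Y ~ Bin(n, p) with
np ≤ ν ≤ k, and X is a nonnegative random variable with mean μ₀ that is
stochastically dominated by kY, then for all θ ∈ [-1, 1],
E[(X - μ₀)² e^{θ(X - μ₀)}] ≤ Kν. -/
theorem binomial_domination_exp_moment (k : ℝ) (hk : 0 < k) :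
    ∃ K : ℝ, 0 < K ∧
      ∀ (Ω Ω' : Type) (_ : MeasurableSpace Ω) (_ : MeasurableSpace Ω')
          (μ : Measure Ω) (μ' : Measure Ω'),
        IsProbabilityMeasure μ → IsProbabilityMeasure μ' →
        ∀ (n : ℕ) (p ν : ℝ) (Y : Ω' → ℕ) (X : Ω → ℝ) (μ₀ : ℝ),
          0 ≤ p → p ≤ 1 → (n : ℝ) * p ≤ ν → ν ≤ k →
          (∀ m : ℕ, μ' {ω | Y ω = m} =
            ENNReal.ofReal ((n.choose m : ℝ) * p ^ m * (1 - p) ^ (n - m))) →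
          (∀ ω, 0 ≤ X ω) →
          Integrable X μ → ∫ ω, X ω ∂μ = μ₀ →
          (∀ x : ℝ, μ {ω | x ≤ X ω} ≤ μ' {ω | x ≤ k * (Y ω : ℝ)}) →
          ∀ θ : ℝ, -1 ≤ θ → θ ≤ 1 →
            ∫⁻ ω, ENNReal.ofReal ((X ω - μ₀) ^ 2 * Real.exp (θ * (X ω - μ₀))) ∂μ
              ≤ ENNReal.ofReal (K * ν) := by
  set A₁ := exp (k * exp k) / k
  set A₃ := exp (k * exp (3 * k)) / k
  set M := k * A₁
  refine ⟨exp M * ((1 + M ^ 2) * A₃ + k * A₁ ^ 2), by positivity, ?_⟩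
  intro Ω Ω' _ _ μ μ' _ _ n p ν Y X μ₀ hp0 hp1 hnp hνk hY hX0 hX hμ₀ hdom θ hθ₁ hθ₂
  have hν0 : 0 ≤ ν := (by positivity : 0 ≤ (n : ℝ) * p).trans hnp
  have hμ₀0 : 0 ≤ μ₀ := hμ₀ ▸ integral_nonneg hX0
  have hμ₀A : μ₀ ≤ ν * A₁ :=
    hμ₀ ▸ integral_le_of_binomial_domination hp0 hp1 hnp hνk hk hY hX0 hX hdom
  have hμ₀M : μ₀ ≤ M := hμ₀A.trans (mul_le_mul_of_nonneg_right hνk (by positivity))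
  have hμ₀sq : μ₀ ^ 2 ≤ ν * (k * A₁ ^ 2) :=
    calc μ₀ ^ 2 ≤ (ν * A₁) ^ 2 := by gcongr
      _ = ν * (ν * A₁ ^ 2) := by ring
      _ ≤ ν * (k * A₁ ^ 2) := by gcongr
  calc ∫⁻ ω, ENNReal.ofReal ((X ω - μ₀) ^ 2 * exp (θ * (X ω - μ₀))) ∂μ
      ≤ ∫⁻ ω, ENNReal.ofReal (exp M * (1 + M ^ 2) * (exp (3 * X ω) - 1) + exp M * μ₀ ^ 2) ∂μ :=
        lintegral_mono fun ω => ENNReal.ofReal_le_ofReal <|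
          (sq_sub_mul_exp_mul_sub_le (hX0 ω) hμ₀0 hμ₀M hθ₁ hθ₂).trans_eq (by ring)
    _ ≤ ENNReal.ofReal (exp M * (1 + M ^ 2)) * ENNReal.ofReal (ν * A₃)
          + ENNReal.ofReal (exp M * (ν * (k * A₁ ^ 2))) := by
        refine (lintegral_ofReal_mul_add_le _ (by positivity) _).trans ?_
        gcongr
        exact lintegral_exp_mul_sub_one_le_of_binomial_domination
          hp0 hp1 hnp hνk hk hY hX0 hX.aemeasurable hdom (by norm_num)
    _ = ENNReal.ofReal (exp M * ((1 + M ^ 2) * A₃ + k * A₁ ^ 2) * ν) := by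
        rw [← ENNReal.ofReal_mul (by positivity), ← ENNReal.ofReal_add (by positivity)
          (by positivity)]
        ring_nf
end

section
/- Fix an integer r ≥ 2 and λ > 1 with λ bounded by a constant A. For λ = 1 + ε, there exist constants 0 < c₂, c₃ < 1 (depending only on r and A) such that for all 0 ≤ τ ≤ c₂ε and ρ = ρ_{r,λ}: g(τ) ≥ c₃ετ, g(ρ - τ) ≥ c₃ετ, and g(ρ + τ) ≤ -c₃ετ, where g(τ) = 1 - τ - exp(-(λ/(r-1))(1 - (1-τ)^{r-1})). -/
/-!
The function `g` satisfies `g 0 = 0`, `g' 0 = ε`, and at `ρ = ρ_{r,λ}` the identity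
`exp (-(λ/(r-1)) (1 - (1-ρ)^(r-1))) = 1 - ρ` gives `g ρ = 0` and `g' ρ = -(1 - λ (1 - ρ_λ))`.
On `[0, 1]` we have `|g''| ≤ λ (r - 1 + λ)`, so the first-order Taylor expansions of `g` at `0`
and at `ρ` are correct up to `O(τ²)`, which the linear term absorbs once `τ ≤ c₂ ε`, provided the
slope at `ρ` is `-Θ(ε)`. For that, `e^x ≥ 1 + x + x²/2` at `x = λ ρ_λ` gives
`ε (2 + x) ≤ x (1 + x)`, hence `1 - λ (1 - ρ_λ) = x - ε ≥ ε / (A + 2)`.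
-/

open Real Set

theorem abs_sub_sub_deriv_mul_le {f f' f'' : ℝ → ℝ} {s : Set ℝ} {M : ℝ} (hs : Convex ℝ s)
    (hf : ∀ x ∈ s, HasDerivAt f (f' x) x) (hf' : ∀ x ∈ s, HasDerivAt f' (f'' x) x)
    (hf'' : ∀ x ∈ s, |f'' x| ≤ M) {a b : ℝ} (ha : a ∈ s) (hb : b ∈ s) :
    |f b - f a - f' a * (b - a)| ≤ M * (b - a) ^ 2 := by
  have hab : uIcc a b ⊆ s := hs.ordConnected.uIcc_subset ha hb
  have hf'_near : ∀ x ∈ uIcc a b, ‖f' x - f' a‖ ≤ M * |b - a| := fun x hx => calc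
    ‖f' x - f' a‖ ≤ M * ‖x - a‖ := hs.norm_image_sub_le_of_norm_hasDerivWithin_le
        (fun y hy => (hf' y hy).hasDerivWithinAt) hf'' ha (hab hx)
    _ ≤ M * |b - a| := by
        have hM : 0 ≤ M := (abs_nonneg _).trans (hf'' a ha)
        exact mul_le_mul_of_nonneg_left (abs_sub_left_of_mem_uIcc hx) hM
  have := (convex_uIcc a b).norm_image_sub_le_of_norm_hasDerivWithin_le
    (f := fun x => f x - f' a * x) (f' := fun x => f' x - f' a)
    (fun x hx => by
      simpa using ((hf x (hab hx)).fun_sub ((hasDerivAt_id x).const_mul (f' a))).hasDerivWithinAt)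
    hf'_near left_mem_uIcc right_mem_uIcc
  calc |f b - f a - f' a * (b - a)| = ‖(f b - f' a * b) - (f a - f' a * a)‖ := by
        rw [Real.norm_eq_abs]; ring_nf
    _ ≤ M * |b - a| * ‖b - a‖ := this
    _ = M * (b - a) ^ 2 := by rw [Real.norm_eq_abs, mul_assoc, ← sq, sq_abs]

-- The paper's `g`, with `l = λ` and `n = r - 1`.
noncomputable def gFun (l : ℝ) (n : ℕ) (σ : ℝ) : ℝ :=
  1 - σ - exp (-(l / n) * (1 - (1 - σ) ^ n))

noncomputable def gDeriv (l : ℝ) (n : ℕ) (σ : ℝ) : ℝ :=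
  -1 + l * (1 - σ) ^ (n - 1) * exp (-(l / n) * (1 - (1 - σ) ^ n))

noncomputable def gDeriv2 (l : ℝ) (n : ℕ) (σ : ℝ) : ℝ :=
  -(l * (n - 1 : ℕ) * (1 - σ) ^ (n - 2) + (l * (1 - σ) ^ (n - 1)) ^ 2) *
    exp (-(l / n) * (1 - (1 - σ) ^ n))

section
variable {l : ℝ} {n : ℕ}

theorem hasDerivAt_one_sub_pow (n : ℕ) (σ : ℝ) :
    HasDerivAt (fun x : ℝ => (1 - x) ^ n) (-(n * (1 - σ) ^ (n - 1))) σ := by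
  simpa using ((hasDerivAt_id' σ).const_sub 1).fun_pow n

theorem hasDerivAt_exp_gFun (hn : n ≠ 0) (σ : ℝ) :
    HasDerivAt (fun σ => exp (-(l / n) * (1 - (1 - σ) ^ n)))
      (-(l * (1 - σ) ^ (n - 1)) * exp (-(l / n) * (1 - (1 - σ) ^ n))) σ := by
  refine (((hasDerivAt_one_sub_pow n σ).const_sub 1).const_mul (-(l / n))).exp.congr_deriv ?_
  field_simp

theorem hasDerivAt_gFun (hn : n ≠ 0) (σ : ℝ) : HasDerivAt (gFun l n) (gDeriv l n σ) σ := by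
  refine (((hasDerivAt_id' σ).const_sub 1).fun_sub (hasDerivAt_exp_gFun hn σ)).congr_deriv ?_
  rw [gDeriv]; ring

theorem hasDerivAt_gDeriv (hn : n ≠ 0) (σ : ℝ) : HasDerivAt (gDeriv l n) (gDeriv2 l n σ) σ := by
  have h := (((hasDerivAt_one_sub_pow (n - 1) σ).const_mul l).fun_mul
    (hasDerivAt_exp_gFun (l := l) hn σ)).const_add (-1)
  simp only [← mul_assoc, Nat.sub_sub] at h
  refine h.congr_deriv ?_
  rw [gDeriv2]; ring

theorem abs_gDeriv2_le (hl : 0 ≤ l) {σ : ℝ} (hσ : σ ∈ Icc (0 : ℝ) 1) :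
    |gDeriv2 l n σ| ≤ l * (n + l) := by
  obtain ⟨hσ0, hσ1⟩ := hσ
  have hu0 : 0 ≤ 1 - σ := by linarith
  have hu1 : 1 - σ ≤ 1 := by linarith
  have hexp : exp (-(l / n) * (1 - (1 - σ) ^ n)) ≤ 1 := by
    have : 0 ≤ 1 - (1 - σ) ^ n := sub_nonneg.mpr (pow_le_one₀ hu0 hu1)
    exact exp_le_one_iff.mpr (by nlinarith [div_nonneg hl n.cast_nonneg])
  have hcoef :
      l * (n - 1 : ℕ) * (1 - σ) ^ (n - 2) + (l * (1 - σ) ^ (n - 1)) ^ 2 ≤ l * (n + l) := by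
    have h1 : ((n - 1 : ℕ) : ℝ) * (1 - σ) ^ (n - 2) ≤ n :=
      (mul_le_of_le_one_right (Nat.cast_nonneg _) (pow_le_one₀ hu0 hu1)).trans
        (by exact_mod_cast n.sub_le 1)
    have h2 : (l * (1 - σ) ^ (n - 1)) ^ 2 ≤ l ^ 2 :=
      pow_le_pow_left₀ (by positivity) (mul_le_of_le_one_right hl (pow_le_one₀ hu0 hu1)) 2
    nlinarith [mul_le_mul_of_nonneg_left h1 hl]
  rw [gDeriv2, abs_mul, abs_neg, abs_of_nonneg (by positivity), abs_of_pos (exp_pos _)]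
  calc _ ≤ l * (n + l) * 1 := by gcongr
    _ = l * (n + l) := mul_one _

theorem abs_gFun_sub_sub_le (hn : n ≠ 0) (hl : 0 ≤ l) {a b : ℝ} (ha : a ∈ Icc (0 : ℝ) 1)
    (hb : b ∈ Icc (0 : ℝ) 1) :
    |gFun l n b - gFun l n a - gDeriv l n a * (b - a)| ≤ l * (n + l) * (b - a) ^ 2 :=
  abs_sub_sub_deriv_mul_le (convex_Icc 0 1) (fun x _ => hasDerivAt_gFun hn x)
    (fun x _ => hasDerivAt_gDeriv hn x) (fun _ hx => abs_gDeriv2_le hl hx) ha hb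

@[simp] theorem gFun_zero : gFun l n 0 = 0 := by simp [gFun]

@[simp] theorem gDeriv_zero : gDeriv l n 0 = l - 1 := by
  simp only [gDeriv, sub_zero, one_pow, mul_one, sub_self, mul_zero, exp_zero]; ring

theorem gFun_eq_zero_of_exp_eq {ρ : ℝ} (h : exp (-(l / n) * (1 - (1 - ρ) ^ n)) = 1 - ρ) :
    gFun l n ρ = 0 := by
  rw [gFun, h]; ring

theorem gDeriv_eq_of_exp_eq (hn : n ≠ 0) {ρ : ℝ}
    (h : exp (-(l / n) * (1 - (1 - ρ) ^ n)) = 1 - ρ) : gDeriv l n ρ = -(1 - l * (1 - ρ) ^ n) := by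
  rw [gDeriv, h, mul_assoc, ← pow_succ, Nat.sub_add_cancel (Nat.one_le_iff_ne_zero.mpr hn)]
  ring

end

theorem gFun_linear_bounds_of_exp_eq {ε c ρ τ : ℝ} {n : ℕ} (hn : n ≠ 0) (hε : 0 ≤ ε)
    (hc : c ≤ 1 / 2) (hfix : exp (-((1 + ε) / n) * (1 - (1 - ρ) ^ n)) = 1 - ρ)
    (hgap : 2 * c * ε ≤ 1 - (1 + ε) * (1 - ρ) ^ n) (hτ : 0 ≤ τ) (hτρ : τ ≤ ρ) (hρτ : ρ + τ ≤ 1)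
    (hcurv : (1 + ε) * (n + (1 + ε)) * τ ≤ c * ε) :
    c * ε * τ ≤ gFun (1 + ε) n τ ∧ c * ε * τ ≤ gFun (1 + ε) n (ρ - τ) ∧
      gFun (1 + ε) n (ρ + τ) ≤ -(c * ε * τ) := by
  have hl : (0 : ℝ) ≤ 1 + ε := by linarith
  have hρ : ρ ∈ Icc (0 : ℝ) 1 := ⟨by linarith, by linarith⟩
  have hquad : (1 + ε) * (n + (1 + ε)) * τ ^ 2 ≤ c * ε * τ := by
    rw [sq, ← mul_assoc]; exact mul_le_mul_of_nonneg_right hcurv hτ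
  have hgapτ := mul_le_mul_of_nonneg_right hgap hτ
  have hcε : c * ε * τ ≤ (1 - c) * ε * τ := by
    have : 0 ≤ ε * τ := mul_nonneg hε hτ
    nlinarith
  have hzero := abs_le.mp (abs_gFun_sub_sub_le (a := 0) (b := τ) hn hl
    ⟨le_rfl, zero_le_one⟩ ⟨hτ, by linarith⟩)
  have hbelow := abs_le.mp (abs_gFun_sub_sub_le (b := ρ - τ) hn hl hρ ⟨by linarith, by linarith⟩)
  have habove := abs_le.mp (abs_gFun_sub_sub_le (b := ρ + τ) hn hl hρ ⟨by linarith, hρτ⟩)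
  simp only [gFun_zero, gDeriv_zero, gFun_eq_zero_of_exp_eq hfix, gDeriv_eq_of_exp_eq hn hfix,
    sub_zero, add_sub_cancel_left, sub_sub_cancel_left, neg_sq] at hzero hbelow habove
  refine ⟨?_, ?_, ?_⟩ <;> linarith

section
variable {ε ρ : ℝ}

theorem nonneg_of_one_sub_eq_exp (hρ : 0 < ρ) (hroot : 1 - ρ = exp (-((1 + ε) * ρ))) : 0 ≤ ε := by
  have : ρ ≤ (1 + ε) * ρ := by linarith [add_one_le_exp (-((1 + ε) * ρ))]
  nlinarith

theorem mul_two_add_le_of_one_sub_eq_exp (hρ : 0 < ρ) (hroot : 1 - ρ = exp (-((1 + ε) * ρ))) :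
    ε * (2 + (1 + ε) * ρ) ≤ (1 + ε) * ρ * (1 + (1 + ε) * ρ) := by
  have hε := nonneg_of_one_sub_eq_exp hρ hroot
  set x := (1 + ε) * ρ
  have hexp : (1 - ρ) * exp x = 1 := by rw [hroot, ← exp_add, neg_add_cancel, exp_zero]
  have h := mul_le_mul_of_nonneg_left (quadratic_le_exp_of_nonneg (x := x) (by positivity))
    (hroot ▸ (exp_pos _).le : 0 ≤ 1 - ρ)
  rw [hexp] at h
  nlinarith

theorem le_mul_of_one_sub_eq_exp (hρ : 0 < ρ) (hroot : 1 - ρ = exp (-((1 + ε) * ρ))) :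
    ε ≤ (1 + ε) * ρ := by
  have hx : 0 ≤ (1 + ε) * ρ := by have := nonneg_of_one_sub_eq_exp hρ hroot; positivity
  nlinarith [mul_two_add_le_of_one_sub_eq_exp hρ hroot]

theorem le_mul_one_sub_mul_of_one_sub_eq_exp {A : ℝ} (hA : 1 + ε ≤ A) (hρ : 0 < ρ)
    (hroot : 1 - ρ = exp (-((1 + ε) * ρ))) : ε ≤ (A + 2) * (1 - (1 + ε) * (1 - ρ)) := by
  have hρ1 : ρ < 1 := by linarith [hroot ▸ exp_pos (-((1 + ε) * ρ))]
  have hεx := le_mul_of_one_sub_eq_exp hρ hroot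
  have hxA : (1 + ε) * ρ ≤ A := by nlinarith [nonneg_of_one_sub_eq_exp hρ hroot]
  nlinarith [mul_two_add_le_of_one_sub_eq_exp hρ hroot]

end

section
variable {ε ρl ρ A : ℝ} {n : ℕ}

theorem exp_neg_div_mul_eq_of_pow_eq (hn : n ≠ 0) (hρ : 0 ≤ 1 - ρ)
    (hpow : (1 - ρ) ^ n = 1 - ρl) (hroot : 1 - ρl = exp (-((1 + ε) * ρl))) :
    exp (-((1 + ε) / n) * (1 - (1 - ρ) ^ n)) = 1 - ρ := by
  rw [← pow_left_inj₀ (exp_pos _).le hρ hn, ← exp_nat_mul, hpow, sub_sub_cancel, hroot]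
  congr 1
  field_simp

theorem le_mul_mul_of_pow_eq (hεA : 1 + ε ≤ A) (hρl : 0 < ρl) (hρ : ρ ∈ Icc (0 : ℝ) 1)
    (hpow : (1 - ρ) ^ n = 1 - ρl) (hroot : 1 - ρl = exp (-((1 + ε) * ρl))) :
    ε ≤ A * (n * ρ) := by
  have hbernoulli := one_add_mul_le_pow (a := -ρ) (by linarith [hρ.2]) n
  rw [← sub_eq_add_neg, hpow] at hbernoulli
  calc ε ≤ (1 + ε) * ρl := le_mul_of_one_sub_eq_exp hρl hroot
    _ ≤ A * (n * ρ) := mul_le_mul hεA (by linarith) hρl.le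
        (by linarith [nonneg_of_one_sub_eq_exp hρl hroot])

theorem exp_neg_le_one_sub_of_pow_eq (hn : n ≠ 0) (hεA : 1 + ε ≤ A) (hρl : 0 < ρl)
    (hρ : ρ ∈ Icc (0 : ℝ) 1) (hpow : (1 - ρ) ^ n = 1 - ρl)
    (hroot : 1 - ρl = exp (-((1 + ε) * ρl))) : exp (-A) ≤ 1 - ρ := calc
  exp (-A) ≤ exp (-((1 + ε) * ρl)) := by
    have : ρl < 1 := by linarith [hroot ▸ exp_pos (-((1 + ε) * ρl))]
    exact exp_le_exp.mpr (by nlinarith [nonneg_of_one_sub_eq_exp hρl hroot])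
  _ = (1 - ρ) ^ n := by rw [hpow, hroot]
  _ ≤ 1 - ρ := pow_le_of_le_one (by linarith [hρ.2]) (by linarith [hρ.1]) hn

theorem gFun_linear_bounds_of_mul_le (hn : n ≠ 0) {c τ : ℝ} (hε : 0 < ε) (hεA : 1 + ε ≤ A)
    (hc0 : 0 ≤ c) (hc : 2 * c * (A + 2) ≤ 1) (hρl : 0 < ρl)
    (hroot : 1 - ρl = exp (-((1 + ε) * ρl))) (hρ : ρ ∈ Icc (0 : ℝ) 1)
    (hpow : (1 - ρ) ^ n = 1 - ρl) (hτ0 : 0 ≤ τ) (hτ : τ * (A * (n + A)) ≤ c * exp (-A) * ε) :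
    c * ε * τ ≤ gFun (1 + ε) n τ ∧ c * ε * τ ≤ gFun (1 + ε) n (ρ - τ) ∧
      gFun (1 + ε) n (ρ + τ) ≤ -(c * ε * τ) := by
  have hA : 0 < A := by linarith
  have hAK : A ≤ A * (n + A) := le_mul_of_one_le_right hA.le (by
    have : (1 : ℝ) ≤ n := by exact_mod_cast Nat.one_le_iff_ne_zero.mpr hn
    linarith)
  have hc1 : c ≤ 1 / 2 := by nlinarith
  have hcε : c * ε ≤ A * (n + A) := by nlinarith
  have hexpA : exp (-A) ≤ 1 := exp_le_one_iff.mpr (by linarith)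
  have hτK : τ * (A * (n + A)) ≤ c * ε :=
    hτ.trans (by nlinarith [mul_le_mul_of_nonneg_left hexpA (by positivity : 0 ≤ c * ε)])
  have hτρ : τ ≤ ρ := by
    refine le_of_mul_le_mul_right ?_ (by positivity : 0 < A * (n + A))
    calc τ * (A * (n + A)) ≤ ε := hτK.trans (by nlinarith)
      _ ≤ A * (n * ρ) := le_mul_mul_of_pow_eq hεA hρl hρ hpow hroot
      _ ≤ ρ * (A * (n + A)) := by nlinarith [mul_nonneg (mul_nonneg hA.le hA.le) hρ.1]
  have hρτ : ρ + τ ≤ 1 := by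
    have hτA : τ ≤ exp (-A) := by
      refine le_of_mul_le_mul_right (hτ.trans ?_) (by positivity : 0 < A * (n + A))
      nlinarith [mul_le_mul_of_nonneg_left hcε (exp_pos (-A)).le]
    linarith [exp_neg_le_one_sub_of_pow_eq hn hεA hρl hρ hpow hroot]
  have hgap : 2 * c * ε ≤ 1 - (1 + ε) * (1 - ρ) ^ n := by
    rw [hpow]
    nlinarith [le_mul_one_sub_mul_of_one_sub_eq_exp hεA hρl hroot]
  have hcurv : (1 + ε) * (n + (1 + ε)) * τ ≤ c * ε := by
    have : (1 + ε) * (n + (1 + ε)) ≤ A * (n + A) := by gcongr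
    nlinarith
  exact gFun_linear_bounds_of_exp_eq hn hε.le hc1
    (exp_neg_div_mul_eq_of_pow_eq hn (by linarith [hρ.2]) hpow hroot) hgap hτ0 hτρ hρτ hcurv

end

/-- Fix r ≥ 2 and A > 1. There exist constants 0 < c₂, c₃ < 1 (depending only on r
and A) such that for all λ = 1 + ε ∈ (1, A] and all 0 ≤ τ ≤ c₂ε, with ρ = ρ_{r,λ}:
g(τ) ≥ c₃ετ, g(ρ - τ) ≥ c₃ετ, and g(ρ + τ) ≤ -c₃ετ. -/
theorem g_linear_bounds (r : ℕ) (hr : 2 ≤ r) (A : ℝ) (hA : 1 < A) :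
    ∃ c₂ c₃ : ℝ, 0 < c₂ ∧ c₂ < 1 ∧ 0 < c₃ ∧ c₃ < 1 ∧
      ∀ ε ρl ρ : ℝ, 0 < ε → 1 + ε ≤ A →
        0 < ρl → ρl < 1 → 1 - ρl = Real.exp (-((1 + ε) * ρl)) →
        1 - ρ = (1 - ρl) ^ ((1 : ℝ) / (r - 1)) →
        ∀ τ : ℝ, 0 ≤ τ → τ ≤ c₂ * ε →
          (fun σ : ℝ => 1 - σ -
              Real.exp (-((1 + ε) / (r - 1)) * (1 - (1 - σ) ^ (r - 1)))) τ ≥ c₃ * ε * τ ∧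
          (fun σ : ℝ => 1 - σ -
              Real.exp (-((1 + ε) / (r - 1)) * (1 - (1 - σ) ^ (r - 1)))) (ρ - τ) ≥ c₃ * ε * τ ∧
          (fun σ : ℝ => 1 - σ -
              Real.exp (-((1 + ε) / (r - 1)) * (1 - (1 - σ) ^ (r - 1)))) (ρ + τ) ≤ -(c₃ * ε * τ) := by
  obtain ⟨n, rfl⟩ : ∃ n, r = n + 1 := ⟨r - 1, by omega⟩
  have hn : n ≠ 0 := by omega
  set c₃ := 1 / (2 * (A + 2)) with hc₃
  have hc₃1 : c₃ < 1 := by rw [hc₃, div_lt_one (by positivity)]; linarith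
  have hK : 1 < A * (n + A) := by nlinarith
  -- `A (r - 1 + A)` bounds `|g''|` on `[0, 1]`, and `τ ≤ exp (-A) ≤ 1 - ρ` keeps `ρ + τ ≤ 1`.
  refine ⟨c₃ * exp (-A) / (A * (n + A)), c₃, by positivity, ?_, by positivity, hc₃1, ?_⟩
  · rw [div_lt_one (by positivity)]
    exact (mul_lt_one_of_nonneg_of_lt_one_left (by positivity) hc₃1
      (exp_le_one_iff.mpr (by linarith))).trans hK
  intro ε ρl ρ hε hεA hρl0 hρl1 hroot hρ τ hτ0 hτ
  push_cast [Nat.add_sub_cancel, add_sub_cancel_right] at hρ ⊢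
  have hρ01 : ρ ∈ Icc (0 : ℝ) 1 := by
    constructor <;> linarith [hρ ▸ rpow_nonneg (by linarith : 0 ≤ 1 - ρl) (1 / n),
      hρ ▸ rpow_le_one (by linarith : 0 ≤ 1 - ρl) (by linarith) (by positivity : 0 ≤ 1 / (n : ℝ))]
  have hpow : (1 - ρ) ^ n = 1 - ρl := by
    rw [hρ, one_div, rpow_inv_natCast_pow (by linarith) hn]
  refine gFun_linear_bounds_of_mul_le hn hε hεA (by positivity) ?_ hρl0 hroot hρ01 hpow hτ0 ?_
  · exact le_of_eq (by rw [hc₃]; field_simp)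
  · calc τ * (A * (n + A)) ≤ c₃ * exp (-A) / (A * (n + A)) * ε * (A * (n + A)) := by gcongr
      _ = c₃ * exp (-A) * ε := by field_simp
end
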